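/- arXiv:1809.00023 — 6 statements merged into one kernel-verified Lean document; each statement's English description precedes it below -/
import Mathlib

section
/- Let (G_{m,n})_{n∈ℕ} be, for each m ∈ ℕ, an inverse sequence of abelian groups, given by transition homomorphisms p_m(a≤b) : G_{m,b} → G_{m,a} for a ≤ b satisfying p_m(a≤a) = id and p_m(a≤b) ∘ p_m(b≤c) = p_m(a≤c). Order ℕ^ℕ pointwise (f ≤ g iff f(m) ≤ g(m) for all m); for f ≤ g this gives a homomorphism ⊕_{m∈ℕ} G_{m,g(m)} → ⊕_{m∈ℕ} G_{m,f(m)} acting as p_m(f(m)≤g(m)) in each summand. Then the natural homomorphism φ : ⊕_{m∈ℕ} lim_n G_{m,n} → lim_{f∈ℕ^ℕ} ⊕_{m∈ℕ} G_{m,f(m)}, sending a finitely supported family of threads (x_m)_{m∈ℕ}, where x_m = (x_{m,n})_{n∈ℕ}, to the thread f ↦ (x_{m,f(m)})_{m∈ℕ}, is bijective. -/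
/-- **Theorem 10.4(b), algebraic core.**
For inverse sequences `(G m n)_n` of abelian groups (one for each `m : ℕ`), the
natural map `⊕_m lim_n G m n → lim_{f ∈ ℕ^ℕ} ⊕_m G m (f m)`, sending a finitely
supported family of threads to the thread `f ↦ (x_{m, f m})_m`, is a bijection
between the set of finitely supported families of threads and the set of threads
of finitely supported families. -/
theorem stmt0 (G : ℕ → ℕ → Type*) [∀ m n, AddCommGroup (G m n)]
    (p : ∀ (m a b : ℕ), a ≤ b → (G m b →+ G m a))
    (hid : ∀ m a, p m a a le_rfl = AddMonoidHom.id (G m a))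
    (hcomp : ∀ m a b c (hab : a ≤ b) (hbc : b ≤ c),
      (p m a b hab).comp (p m b c hbc) = p m a c (hab.trans hbc)) :
    Set.BijOn
      (fun (x : ∀ m n, G m n) => (fun (f : ℕ → ℕ) (m : ℕ) => x m (f m)))
      {x : ∀ m n, G m n |
        (∀ m a b (h : a ≤ b), p m a b h (x m b) = x m a) ∧ {m | x m ≠ 0}.Finite}
      {t : ∀ f : ℕ → ℕ, ∀ m : ℕ, G m (f m) |
        (∀ (f g : ℕ → ℕ) (hfg : ∀ m, f m ≤ g m) (m : ℕ),
          p m (f m) (g m) (hfg m) (t g m) = t f m) ∧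
        ∀ f, {m | t f m ≠ 0}.Finite} := by
  refine ⟨?_, ?_, ?_⟩
  · rintro x ⟨hx, hfin⟩
    refine ⟨fun f g hfg m => hx m (f m) (g m) (hfg m), fun f => hfin.subset ?_⟩
    intro m hm
    simp only [Set.mem_setOf_eq] at hm ⊢
    intro h0
    exact hm (by rw [h0]; rfl)
  · rintro x ⟨hx, _⟩ y ⟨hy, _⟩ hxy
    funext m n
    exact congrFun (congrFun hxy (fun _ => n)) m
  · rintro t ⟨ht, hfin⟩
    have key : ∀ (f : ℕ → ℕ) (m : ℕ), t (fun _ => f m) m = t f m := by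
      intro f m
      have h1 := ht f (fun k => max (f k) (f m)) (fun k => le_max_left _ _) m
      have h2 := ht (fun _ => f m) (fun k => max (f k) (f m))
        (fun k => le_max_right _ _) m
      rw [← h1, ← h2]
    refine ⟨fun m n => t (fun _ => n) m, ⟨?_, ?_⟩, ?_⟩
    · intro m a b h
      exact ht (fun _ => a) (fun _ => b) (fun _ => h) m
    · classical
      set f : ℕ → ℕ := fun m =>
        if h : ∃ n, t (fun _ => n) m ≠ 0 then h.choose else 0 with hf
      refine (hfin f).subset ?_
      intro m hm
      simp only [Set.mem_setOf_eq] at hm ⊢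
      rw [Function.ne_iff] at hm
      have h : ∃ n, t (fun _ => n) m ≠ 0 := hm
      have hfm : f m = h.choose := by rw [hf]; exact dif_pos h
      have := h.choose_spec
      rw [← hfm] at this
      rw [← key f m]
      exact this
    · funext f m
      exact key f m
end

section
/- Let Σ = ⊕_{n∈ℕ} ℤ be the free abelian group on countably many generators. For every subgroup G ≤ Σ such that the quotient Σ/G is finitely generated, there exist subgroups H and F of Σ such that H ⊆ G, F is finitely generated, H ∩ F = 0, and H + F = Σ (so H is a direct summand of Σ with finitely generated complement, contained in G). -/
/-!
Lift a finite generating set of `Σ/G` to `Σ`; the lifts are supported on a finite set `S`, so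
`G + F = Σ` for `F = ℤ^S`, the finitely supported sequences vanishing off `S`. The quotient
`Σ/F ≅ ℤ^(ℕ \ S)` is free, hence projective, so the surjection `G → Σ/F` has a section; its image
`H ≤ G` is a complement of `F`.
-/

open Submodule

section Ring

variable {R M : Type*} [Ring R] [AddCommGroup M] [Module R M]

theorem Submodule.exists_fg_sup_eq_top (G : Submodule R M) [Module.Finite R (M ⧸ G)] :
    ∃ F : Submodule R M, F.FG ∧ G ⊔ F = ⊤ := by
  obtain ⟨n, f, hf⟩ := Module.Finite.exists_fin' R (M ⧸ G)
  obtain ⟨g, hg⟩ := Module.projective_lifting_property G.mkQ f G.mkQ_surjective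
  refine ⟨LinearMap.range g, fg_range g, ?_⟩
  rw [← map_mkQ_eq_top, ← LinearMap.range_comp, hg, LinearMap.range_eq_top.mpr hf]

theorem Submodule.exists_le_isCompl_of_sup_eq_top {F G : Submodule R M}
    [Module.Projective R (M ⧸ F)] (hGF : G ⊔ F = ⊤) : ∃ H ≤ G, IsCompl H F := by
  have hsurj : Function.Surjective (F.mkQ ∘ₗ G.subtype) := by
    rw [← LinearMap.range_eq_top, LinearMap.range_comp, range_subtype, map_mkQ_eq_top,
      sup_comm, hGF]
  obtain ⟨s, hs⟩ := Module.projective_lifting_property _ LinearMap.id hsurj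
  -- `e` is an idempotent with range inside `G` and kernel `F`.
  set e : M →ₗ[R] M := G.subtype ∘ₗ s ∘ₗ F.mkQ
  have hmk : ∀ x, F.mkQ (e x) = F.mkQ x := fun x => LinearMap.congr_fun hs (F.mkQ x)
  have he : IsIdempotentElem e := by
    ext x
    change G.subtype (s (F.mkQ (e x))) = e x
    rw [hmk]
    rfl
  refine ⟨LinearMap.range e, ?_, ?_⟩
  · rintro _ ⟨x, rfl⟩
    exact (s (F.mkQ x)).2
  · convert LinearMap.IsIdempotentElem.isCompl he
    ext x
    refine ⟨fun hx => ?_, fun hx => ?_⟩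
    · simp [e, (Quotient.mk_eq_zero F).mpr hx]
    · rw [← Quotient.mk_eq_zero, ← mkQ_apply, ← hmk, LinearMap.mem_ker.mp hx, map_zero]

end Ring

namespace Finsupp

variable {α R M : Type*}

theorem isCompl_supported [Semiring R] [AddCommMonoid M] [Module R M] (s : Set α) :
    IsCompl (supported M R s) (supported M R sᶜ) :=
  ⟨disjoint_supported_supported disjoint_compl_right,
    codisjoint_iff.mpr (by rw [← supported_union, Set.union_compl_self, supported_univ])⟩

theorem exists_finset_le_supported [Semiring R] [AddCommMonoid M] [Module R M]
    {F : Submodule R (α →₀ M)} (hF : F.FG) : ∃ S : Finset α, F ≤ supported M R (S : Set α) := by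
  obtain ⟨t, rfl⟩ := hF
  classical
  refine ⟨t.biUnion fun x : α →₀ M => x.support, span_le.mpr fun x hx => ?_⟩
  exact (mem_supported R x).mpr (Finset.coe_subset.mpr (Finset.subset_biUnion_of_mem _ hx))

theorem fg_supported_finset [Semiring R] (S : Finset α) : (supported R R (S : Set α)).FG := by
  rw [supported_eq_span_single]
  exact fg_span (S.finite_toSet.image _)

instance projective_quotient_supported [Ring R] (s : Set α) :
    Module.Projective R ((α →₀ R) ⧸ supported R R s) :=
  .of_equiv (quotientEquivOfIsCompl _ _ (isCompl_supported s) ≪≫ₗ supportedEquivFinsupp sᶜ).symm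

end Finsupp

/-- Every subgroup `G` of `Σ = ⊕_{n∈ℕ} ℤ` with finitely generated quotient `Σ/G`
contains a direct summand `H` of `Σ` with finitely generated complement `F`. -/
theorem stmt8 (G : AddSubgroup (ℕ →₀ ℤ))
    (hG : AddGroup.FG ((ℕ →₀ ℤ) ⧸ G)) :
    ∃ H F : AddSubgroup (ℕ →₀ ℤ),
      H ≤ G ∧ F.FG ∧ H ⊓ F = ⊥ ∧ H ⊔ F = ⊤ := by
  have : Module.Finite ℤ ((ℕ →₀ ℤ) ⧸ G.toIntSubmodule) := Module.Finite.iff_addGroup_fg.mpr hG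
  obtain ⟨F₀, hF₀, hGF₀⟩ := G.toIntSubmodule.exists_fg_sup_eq_top
  obtain ⟨S, hF₀S⟩ := Finsupp.exists_finset_le_supported hF₀
  have hGS : G.toIntSubmodule ⊔ Finsupp.supported ℤ ℤ (S : Set ℕ) = ⊤ :=
    top_unique (hGF₀ ▸ sup_le_sup_left hF₀S _)
  obtain ⟨H, hHG, hHS⟩ := exists_le_isCompl_of_sup_eq_top hGS
  refine ⟨H.toAddSubgroup, (Finsupp.supported ℤ ℤ (S : Set ℕ)).toAddSubgroup, hHG,
    (fg_iff_addSubgroup_fg _).mp (Finsupp.fg_supported_finset S), ?_, ?_⟩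
  · exact congrArg toAddSubgroup hHS.inf_eq_bot
  · rw [← sup_toAddSubgroup, hHS.sup_eq_top, top_toAddSubgroup]
end

section
/- Let G be an abelian group and let Φ : G → Hom(Hom(G,ℤ), ℤ) be the natural evaluation map, Φ(g)(f) = f(g); assume Φ is bijective. Let H ≤ G be a direct summand of G such that for every g ∈ G with g ∉ H there exists a subgroup F ≤ G with: g ∈ F, F is a direct summand of G, H is a direct summand of F, and F/H is a free abelian group. Let H* = {f ∈ Hom(G,ℤ) : H ⊆ ker f} and H** = {φ ∈ Hom(Hom(G,ℤ),ℤ) : H* ⊆ ker φ}. Then Φ(H) = H**. -/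
/-! If `Φ(g)` annihilates `H*` but `g ∉ H`, take the summand `F ∋ g` and compose the retraction
`G → F` with `F → F/H` and a coordinate of the free group `F/H` that does not vanish on the
class of `g`: this is an element of `H*` not killed by `Φ(g)`. Surjectivity of `Φ` gives every
element of `H**` the form `Φ(g)`. -/

/-- The annihilator `H* = {f ∈ Hom(G, A) | H ⊆ ker f}` of a subgroup `H ≤ G`,
as a subgroup of the group `Hom(G, ℤ)`. -/
def ann {G : Type*} [AddCommGroup G] (H : AddSubgroup G) : AddSubgroup (G →+ ℤ) where
  carrier := {f | ∀ x ∈ H, f x = 0}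
  zero_mem' := fun x _ => rfl
  add_mem' := by
    intro f g hf hg x hx
    simp [hf x hx, hg x hx]
  neg_mem' := by
    intro f hf x hx
    simp [hf x hx]

/-- The natural evaluation map `Φ : G → Hom(Hom(G, ℤ), ℤ)`, `Φ(g)(f) = f(g)`. -/
def evalHom {G : Type*} [AddCommGroup G] (g : G) : (G →+ ℤ) →+ ℤ where
  toFun f := f g
  map_zero' := rfl
  map_add' _ _ := rfl

lemma AddSubgroup.exists_retraction_of_isCompl {G : Type*} [AddCommGroup G]
    {F C : AddSubgroup G} (h : IsCompl F C) : ∃ p : G →+ F, ∀ x : F, p x = x :=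
  ⟨(Submodule.projectionOnto _ _ (AddSubgroup.toIntSubmodule.isCompl h)).toAddMonoidHom,
    Submodule.projectionOnto_apply_left (AddSubgroup.toIntSubmodule.isCompl h)⟩

lemma exists_mem_ann_apply_ne_zero {G : Type*} [AddCommGroup G] {H F C : AddSubgroup G}
    (hFC : IsCompl F C) (hHF : H ≤ F) [Module.Free ℤ (F ⧸ H.addSubgroupOf F)]
    {g : G} (hgF : g ∈ F) (hgH : g ∉ H) : ∃ f ∈ ann H, f g ≠ 0 := by
  obtain ⟨p, hp⟩ := AddSubgroup.exists_retraction_of_isCompl hFC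
  let q := QuotientAddGroup.mk' (H.addSubgroupOf F)
  have hqg : q ⟨g, hgF⟩ ≠ 0 := by
    simpa [q, QuotientAddGroup.eq_zero_iff, AddSubgroup.mem_addSubgroupOf] using hgH
  obtain ⟨φ, hφ⟩ := Module.Projective.exists_dual_ne_zero ℤ hqg
  refine ⟨φ.toAddMonoidHom.comp (q.comp p), fun h hh => ?_, ?_⟩
  · have : q (p h) = 0 := by
      rw [hp ⟨h, hHF hh⟩]
      exact (QuotientAddGroup.eq_zero_iff _).2 (AddSubgroup.mem_addSubgroupOf.2 hh)
    simp [this]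
  · simpa [hp ⟨g, hgF⟩] using hφ

lemma evalHom_mem_ann_ann {G : Type*} [AddCommGroup G] {H : AddSubgroup G} {g : G}
    (hg : g ∈ H) : evalHom g ∈ ann (ann H) :=
  fun _ hf => hf g hg

theorem stmt10_general (G : Type*) [AddCommGroup G]
    (hΦ : Function.Bijective (fun g : G => evalHom g))
    (H : AddSubgroup G)
    (hF : ∀ g : G, g ∉ H →
      ∃ F : AddSubgroup G, g ∈ F ∧
        (∃ C : AddSubgroup G, F ⊓ C = ⊥ ∧ F ⊔ C = ⊤) ∧
        H ≤ F ∧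
        (∃ D : AddSubgroup G, D ≤ F ∧ H ⊓ D = ⊥ ∧ H ⊔ D = F) ∧
        Module.Free ℤ (F ⧸ H.addSubgroupOf F)) :
    (fun g : G => evalHom g) '' (H : Set G) =
      (ann (ann H) : Set ((G →+ ℤ) →+ ℤ)) := by
  refine Set.Subset.antisymm (Set.image_subset_iff.2 fun g => evalHom_mem_ann_ann) ?_
  intro φ hφ
  obtain ⟨g, rfl⟩ := hΦ.2 φ
  refine ⟨g, ?_, rfl⟩
  by_contra hgH
  obtain ⟨F, hgF, ⟨C, hFC, hFC'⟩, hHF, -, hfree⟩ := hF g hgH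
  obtain ⟨f, hf, hfg⟩ := exists_mem_ann_apply_ne_zero (.of_eq hFC hFC') hHF hgF hgH
  exact hfg (hφ f hf)

/-- **Double annihilator claim of the Remark on Kuz'minov's example.**
If `Φ : G → Hom(Hom(G,ℤ),ℤ)` is bijective, `H` is a direct summand of `G`, and every
`g ∉ H` lies in a direct summand `F` of `G` which contains `H` as a direct summand
with free quotient `F/H`, then `Φ(H) = H**`. -/
theorem stmt10 (G : Type*) [AddCommGroup G]
    (hΦ : Function.Bijective (fun g : G => evalHom g))
    (H : AddSubgroup G)
    (hsummand : ∃ C : AddSubgroup G, H ⊓ C = ⊥ ∧ H ⊔ C = ⊤)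
    (hF : ∀ g : G, g ∉ H →
      ∃ F : AddSubgroup G, g ∈ F ∧
        (∃ C : AddSubgroup G, F ⊓ C = ⊥ ∧ F ⊔ C = ⊤) ∧
        H ≤ F ∧
        (∃ D : AddSubgroup G, D ≤ F ∧ H ⊓ D = ⊥ ∧ H ⊔ D = F) ∧
        Module.Free ℤ (F ⧸ H.addSubgroupOf F)) :
    (fun g : G => evalHom g) '' (H : Set G) =
      (ann (ann H) : Set ((G →+ ℤ) →+ ℤ)) :=
  stmt10_general G hΦ H hF
end

section
/- Let ⋯ ⊆ F_1 ⊆ F_0 be a descending chain of free abelian groups in which each F_{i+1} is pure in F_i, and let H_i ≤ F_i be finitely generated subgroups with H_{i+1} ⊆ H_i for all i. Let H̄_i = {g ∈ F_i : there exists a nonzero integer n with n·g ∈ H_i} be the purification of H_i in F_i. Then each H̄_i is a finitely generated subgroup containing H_i, H̄_{i+1} ⊆ H̄_i with H̄_{i+1} pure in H̄_i for all i, and the map ∏_{i∈ℕ} H̄_i → ∏_{i∈ℕ} H̄_i sending (g_i) to (g_i − g_{i+1}) is surjective, i.e. lim¹ H̄_i = 0. (Consequently lim¹_fg of the inverse sequence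 (F_i) vanishes.) -/
/-!
The purification of `H_i` in the free group `F_i` lies in the span of the finitely many basis
vectors occurring in the generators of `H_i`, so it is finitely generated. Since each `H̄_{i+1}`
is pure in `H̄_i`, the rank of `H̄_i` drops whenever the chain shrinks; hence the chain is
eventually constant, and then telescoping sums solve `x_i = y_i - y_{i+1}`.
-/

open Module

namespace Submodule

variable {R M : Type*} [CommRing R] [IsDomain R] [AddCommGroup M] [Module R M]

theorem exists_fg_saturated_ge [Module.Free R M] {N : Submodule R M} (hN : N.FG) :
    ∃ W : Submodule R M, W.FG ∧ N ≤ W ∧ ∀ (r : R) (x : M), r ≠ 0 → r • x ∈ W → x ∈ W := by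
  classical
  obtain ⟨s, rfl⟩ := hN
  let b := Free.chooseBasis R M
  let T := s.biUnion fun m ↦ (b.repr m).support
  refine ⟨span R (b '' T), fg_span (T.finite_toSet.image b), span_le.2 fun m hm ↦ ?_,
    fun r x hr hx ↦ ?_⟩
  · exact b.mem_span_image.2 <|
      Finset.coe_subset.2 (Finset.subset_biUnion_of_mem (fun m ↦ (b.repr m).support) hm)
  · rw [b.mem_span_image, map_smul, Finsupp.support_smul_eq hr] at hx
    exact b.mem_span_image.2 hx

theorem eq_of_le_of_finrank_eq_of_saturated {K L : Submodule R M} [Module.Finite R L]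
    (hKL : K ≤ L) (hK : ∀ x ∈ L, ∀ r : R, r ≠ 0 → r • x ∈ K → x ∈ K)
    (h : finrank R K = finrank R L) : K = L := by
  set N := K.comap L.subtype
  have hN : finrank R N = finrank R K := (comapSubtypeEquivOfLe hKL).finrank_eq
  have htors : IsTorsion R (L ⧸ N) := by
    rw [← finrank_eq_zero_iff_isTorsion]
    have := N.finrank_quotient_add_finrank
    omega
  refine le_antisymm hKL fun x hx ↦ ?_
  obtain ⟨⟨a, ha⟩, hax⟩ := @htors (N.mkQ ⟨x, hx⟩)
  rw [Submonoid.mk_smul, ← map_smul, mkQ_apply, Quotient.mk_eq_zero] at hax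
  exact hK x hx a (nonZeroDivisors.ne_zero ha) hax

end Submodule

namespace AddSubgroup

variable {A : Type*} [AddCommGroup A]

def IsPureIn (K G : AddSubgroup A) : Prop :=
  ∀ g ∈ G, ∀ n : ℤ, n ≠ 0 → n • g ∈ K → g ∈ K

def purification (F H : AddSubgroup A) : AddSubgroup A where
  carrier := {g | g ∈ F ∧ ∃ n : ℤ, n ≠ 0 ∧ n • g ∈ H}
  zero_mem' := ⟨F.zero_mem, 1, one_ne_zero, by simp⟩
  add_mem' := by
    rintro a b ⟨haF, m, hm, hma⟩ ⟨hbF, n, hn, hnb⟩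
    refine ⟨F.add_mem haF hbF, m * n, mul_ne_zero hm hn, ?_⟩
    rw [smul_add, mul_comm, mul_smul, mul_comm, mul_smul]
    exact H.add_mem (H.zsmul_mem hma n) (H.zsmul_mem hnb m)
  neg_mem' := by
    rintro a ⟨haF, n, hn, hna⟩
    exact ⟨F.neg_mem haF, n, hn, by rw [smul_neg]; exact H.neg_mem hna⟩

variable {F F' H H' : AddSubgroup A}

theorem le_purification (hHF : H ≤ F) : H ≤ purification F H :=
  fun g hg ↦ ⟨hHF hg, 1, one_ne_zero, by simpa using hg⟩

theorem purification_mono (hF : F' ≤ F) (hH : H' ≤ H) : purification F' H' ≤ purification F H :=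
  fun _ ⟨hgF, n, hn, hng⟩ ↦ ⟨hF hgF, n, hn, hH hng⟩

theorem IsPureIn.purification (h : F'.IsPureIn F) :
    (purification F' H').IsPureIn (purification F H) := by
  rintro g hg n hn ⟨hngF, m, hm, hmng⟩
  exact ⟨h g hg.1 n hn hngF, m * n, mul_ne_zero hm hn, by rwa [mul_smul]⟩

theorem purification_fg [Module.Free ℤ F] (hHF : H ≤ F) (hH : H.FG) :
    (purification F H).FG := by
  let ι : F →ₗ[ℤ] A := F.subtype.toIntLinearMap
  let N := H.toIntSubmodule.comap ι
  have hN : N.FG := by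
    refine Submodule.fg_of_fg_map_injective ι Subtype.val_injective ?_
    rw [Submodule.map_comap_eq_self fun g hg ↦ ⟨⟨g, hHF hg⟩, rfl⟩, Submodule.fg_iff_addSubgroup_fg]
    exact hH
  obtain ⟨W, hW, hNW, hWsat⟩ := Submodule.exists_fg_saturated_ge hN
  have hle : (purification F H).toIntSubmodule ≤ W.map ι := by
    rintro g ⟨hgF, n, hn, hng⟩
    exact ⟨⟨g, hgF⟩, hWsat n _ hn (hNW hng), rfl⟩
  rw [← toIntSubmodule_toAddSubgroup (purification F H), ← Submodule.fg_iff_addSubgroup_fg]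
  exact (hW.map ι).of_le hle

theorem exists_eq_of_isPureIn_succ {G : ℕ → AddSubgroup A} (hG : Antitone G)
    (hfg : ∀ i, (G i).FG) (hpure : ∀ i, (G (i + 1)).IsPureIn (G i)) :
    ∃ N, ∀ i, N ≤ i → G i = G N := by
  have hfin : ∀ i, Module.Finite ℤ (G i).toIntSubmodule := fun i ↦
    Module.Finite.iff_fg.2 ((Submodule.fg_iff_addSubgroup_fg _).2 (hfg i))
  let r i := finrank ℤ (G i).toIntSubmodule
  obtain ⟨N, hN⟩ := WellFoundedLT.antitone_chain_condition (f := r) fun i j hij ↦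
    Submodule.finrank_mono (t := (G i).toIntSubmodule) (toIntSubmodule.monotone (hG hij))
  have hstep : ∀ i, N ≤ i → G (i + 1) = G i := fun i hi ↦
    toIntSubmodule.injective <| Submodule.eq_of_le_of_finrank_eq_of_saturated
      (toIntSubmodule.monotone (hG i.le_succ)) (hpure i)
      ((hN (i + 1) (hi.trans i.le_succ)).symm.trans (hN i hi))
  refine ⟨N, fun i hi ↦ ?_⟩
  induction i, hi using Nat.le_induction with
  | base => rfl
  | succ i hi ih => rw [hstep i hi, ih]

theorem exists_eq_sub_succ_of_eventually_eq {G : ℕ → AddSubgroup A} (hG : Antitone G) {N : ℕ}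
    (hN : ∀ i, N ≤ i → G i = G N) {x : ℕ → A} (hx : ∀ i, x i ∈ G i) :
    ∃ y : ℕ → A, (∀ i, y i ∈ G i) ∧ ∀ i, x i = y i - y (i + 1) := by
  refine ⟨fun i ↦ ∑ j ∈ Finset.range N, x j - ∑ j ∈ Finset.range i, x j, fun i ↦ ?_, fun i ↦ ?_⟩
  · dsimp only
    rcases le_total i N with hiN | hNi
    · rw [← Finset.sum_Ico_eq_sub _ hiN]
      exact sum_mem fun j hj ↦ hG (Finset.mem_Ico.1 hj).1 (hx j)
    · rw [← neg_sub, ← Finset.sum_Ico_eq_sub _ hNi, hN i hNi]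
      refine neg_mem (sum_mem fun j hj ↦ ?_)
      rw [← hN j (Finset.mem_Ico.1 hj).1]
      exact hx j
  · simp only [Finset.sum_range_succ]
    abel

end AddSubgroup

/-- **Example on `lim¹_fg` of pure inclusions between free abelian groups.**
Given a descending chain `⋯ ⊆ F₁ ⊆ F₀` of free abelian groups with each `F_{i+1}`
pure in `F_i`, and finitely generated subgroups `H_i ≤ F_i` with `H_{i+1} ⊆ H_i`,
the purifications `H̄_i = {g ∈ F_i | ∃ n ≠ 0, n • g ∈ H_i}` form a descending chain
of finitely generated subgroups, each containing `H_i`, with `H̄_{i+1}` pure in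
`H̄_i`, and `lim¹ H̄_i = 0`, i.e. the map `(g_i) ↦ (g_i − g_{i+1})` on `∏ H̄_i`
is surjective. -/
theorem stmt13 (A : Type*) [AddCommGroup A]
    (F : ℕ → AddSubgroup A) (hFdesc : ∀ i, F (i + 1) ≤ F i)
    (hFfree : ∀ i, Module.Free ℤ (F i))
    (hFpure : ∀ i, ∀ g ∈ F i, ∀ n : ℤ, n ≠ 0 → n • g ∈ F (i + 1) → g ∈ F (i + 1))
    (H : ℕ → AddSubgroup A) (hHF : ∀ i, H i ≤ F i)
    (hHfg : ∀ i, (H i).FG) (hHdesc : ∀ i, H (i + 1) ≤ H i) :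
    ∃ Hb : ℕ → AddSubgroup A,
      (∀ i, (Hb i : Set A) = {g : A | g ∈ F i ∧ ∃ n : ℤ, n ≠ 0 ∧ n • g ∈ H i}) ∧
      (∀ i, (Hb i).FG) ∧
      (∀ i, H i ≤ Hb i) ∧
      (∀ i, Hb (i + 1) ≤ Hb i) ∧
      (∀ i, ∀ g ∈ Hb i, ∀ n : ℤ, n ≠ 0 → n • g ∈ Hb (i + 1) → g ∈ Hb (i + 1)) ∧
      (∀ x : ∀ _ : ℕ, A, (∀ i, x i ∈ Hb i) →
        ∃ y : ∀ _ : ℕ, A, (∀ i, y i ∈ Hb i) ∧ ∀ i, x i = y i - y (i + 1)) := by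
  let Hb i := AddSubgroup.purification (F i) (H i)
  have hfg i : (Hb i).FG := have := hFfree i; AddSubgroup.purification_fg (hHF i) (hHfg i)
  have hdesc i : Hb (i + 1) ≤ Hb i := AddSubgroup.purification_mono (hFdesc i) (hHdesc i)
  have hpure i : (Hb (i + 1)).IsPureIn (Hb i) := AddSubgroup.IsPureIn.purification (hFpure i)
  have hanti : Antitone Hb := antitone_nat_of_succ_le hdesc
  obtain ⟨N, hN⟩ := AddSubgroup.exists_eq_of_isPureIn_succ hanti hfg hpure
  exact ⟨Hb, fun i ↦ rfl, hfg, fun i ↦ AddSubgroup.le_purification (hHF i), hdesc, hpure,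
    fun x hx ↦ AddSubgroup.exists_eq_sub_succ_of_eventually_eq hanti hN hx⟩
end

section
/- Let A, B, C, D be cochain complexes of abelian groups and let p : A → B, q : A → C, r : B → D, s : C → D be cochain maps with r ∘ p = s ∘ q. Assume that for every degree n: (1) the square of abelian groups (Aⁿ, Bⁿ, Cⁿ, Dⁿ) is a pullback, i.e. for all b ∈ Bⁿ and c ∈ Cⁿ with r(b) = s(c) there is a unique a ∈ Aⁿ with p(a) = b and q(a) = c; and (2) the map s : Cⁿ → Dⁿ is surjective. Then for every n and every pair of cohomology classes β ∈ Hⁿ(B) and γ ∈ Hⁿ(C) with r_*(β) = s_*(γ) in Hⁿ(D), there exists α ∈ Hⁿ(A) with p_*(α) = β and q_*(α) = γ; that is, Hⁿ(A) surjects onto the pullback of Hⁿ(r) and Hⁿ(s). -/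
open CategoryTheory HomologicalComplex

universe u

namespace Stmt16Aux

open CategoryTheory.ShortComplex

variable {S₁ S₂ : ShortComplex AddCommGrpCat.{u}}

lemma mem_ker_map (φ : S₁ ⟶ S₂) (x : AddMonoidHom.ker S₁.g.hom) :
    S₂.g (φ.τ₂ x.1) = 0 := by
  rw [← ConcreteCategory.comp_apply, φ.comm₂₃, ConcreteCategory.comp_apply, show S₁.g x.1 = 0 from x.2]
  exact map_zero φ.τ₃.hom

/-- The induced map on kernels of `g`. -/
def kerMap (φ : S₁ ⟶ S₂) : AddMonoidHom.ker S₁.g.hom →+ AddMonoidHom.ker S₂.g.hom :=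
  AddMonoidHom.mk' (fun x => ⟨φ.τ₂ x.1, mem_ker_map φ x⟩)
    (fun a b => by apply Subtype.ext; simp)

@[simp] lemma kerMap_coe (φ : S₁ ⟶ S₂) (x : AddMonoidHom.ker S₁.g.hom) :
    (kerMap φ x).1 = φ.τ₂ x.1 := rfl

lemma kerMap_abToCycles (φ : S₁ ⟶ S₂) (w : S₁.X₁) :
    kerMap φ (S₁.abToCycles w) = S₂.abToCycles (φ.τ₁ w) := by
  apply Subtype.ext
  show φ.τ₂ (S₁.f w) = S₂.f (φ.τ₁ w)
  rw [← ConcreteCategory.comp_apply, ← φ.comm₁₂, ConcreteCategory.comp_apply]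

/-- The left homology map data between the explicit `ab` left homology datas. -/
def mapData (φ : S₁ ⟶ S₂) :
    LeftHomologyMapData φ S₁.abLeftHomologyData S₂.abLeftHomologyData where
  φK := AddCommGrpCat.ofHom (kerMap φ)
  φH := AddCommGrpCat.ofHom (QuotientAddGroup.map _ _ (kerMap φ) (by
    rintro x ⟨w, rfl⟩
    exact ⟨φ.τ₁ w, (kerMap_abToCycles φ w).symm⟩))
  commi := by ext x; rfl
  commf' := by
    rw [abLeftHomologyData_f', abLeftHomologyData_f']
    ext w
    erw [ConcreteCategory.comp_apply, ConcreteCategory.comp_apply]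
    exact kerMap_abToCycles φ w
  commπ := by ext x; rfl

lemma hom_inv_apply {X Y : AddCommGrpCat.{u}} (e : X ≅ Y) (y : Y) :
    e.hom (e.inv y) = y := by
  rw [← ConcreteCategory.comp_apply, Iso.inv_hom_id, ConcreteCategory.id_apply]

lemma zero_app {X Y : AddCommGrpCat.{u}} (x : X) : (0 : X ⟶ Y) x = 0 :=
  AddMonoidHom.zero_apply x

lemma homologyMap_abHomologyIso_inv (φ : S₁ ⟶ S₂) (x : AddMonoidHom.ker S₁.g.hom) :
    ShortComplex.homologyMap φ (S₁.abHomologyIso.inv (QuotientAddGroup.mk x)) =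
      S₂.abHomologyIso.inv (QuotientAddGroup.mk (kerMap φ x)) := by
  dsimp only [abHomologyIso]
  have hinj : Function.Injective S₂.abLeftHomologyData.homologyIso.hom := by
    intro u v h
    have h' := congrArg S₂.abLeftHomologyData.homologyIso.inv h
    rwa [← ConcreteCategory.comp_apply, Iso.hom_inv_id, ConcreteCategory.id_apply, ← ConcreteCategory.comp_apply, Iso.hom_inv_id, ConcreteCategory.id_apply] at h'
  apply hinj
  rw [← ConcreteCategory.comp_apply, (mapData φ).homologyMap_comm, ConcreteCategory.comp_apply]
  erw [hom_inv_apply, hom_inv_apply]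
  rfl

lemma homologyMap_inv_mk {K L : CochainComplex AddCommGrpCat.{u} ℤ} (f : K ⟶ L) (n : ℤ)
    (x : AddMonoidHom.ker (K.sc n).g.hom) :
    HomologicalComplex.homologyMap f n
        ((K.sc n).abHomologyIso.inv (QuotientAddGroup.mk x)) =
      (L.sc n).abHomologyIso.inv (QuotientAddGroup.mk
        (kerMap ((shortComplexFunctor _ _ n).map f) x)) :=
  homologyMap_abHomologyIso_inv _ x

lemma inv_injective {X Y : AddCommGrpCat.{u}} (e : X ≅ Y) :
    Function.Injective e.inv := by
  intro u v h
  have h' := congrArg e.hom h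
  rwa [← ConcreteCategory.comp_apply, Iso.inv_hom_id, ConcreteCategory.id_apply, ← ConcreteCategory.comp_apply, Iso.inv_hom_id, ConcreteCategory.id_apply] at h'

/-- The underlying element in `K.X n` of a cocycle. -/
def val2 {K : CochainComplex AddCommGrpCat.{u} ℤ} {n : ℤ}
    (x : AddMonoidHom.ker (K.sc n).g.hom) : K.X n := x.1

end Stmt16Aux

open Stmt16Aux CategoryTheory.ShortComplex

/-- **Cochain-level pullback lemma (part (a)).**
Given a degreewise-pullback commuting square of cochain complexes of abelian groups
in which `s` is degreewise surjective, `Hⁿ(A)` surjects onto the pullback of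
`Hⁿ(r)` and `Hⁿ(s)`. -/
theorem stmt16 (A B C D : CochainComplex AddCommGrpCat.{u} ℤ)
    (p : A ⟶ B) (q : A ⟶ C) (r : B ⟶ D) (s : C ⟶ D)
    (hcomm : p ≫ r = q ≫ s)
    (hpullback : ∀ (n : ℤ) (b : B.X n) (c : C.X n), r.f n b = s.f n c →
      ∃! a : A.X n, p.f n a = b ∧ q.f n a = c)
    (hsurj : ∀ n : ℤ, Function.Surjective (s.f n)) :
    ∀ (n : ℤ) (β : B.homology n) (γ : C.homology n),
      homologyMap r n β = homologyMap s n γ →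
        ∃ α : A.homology n, homologyMap p n α = β ∧ homologyMap q n α = γ := by
  intro n β γ hβγ
  set m := (ComplexShape.up ℤ).prev n with hm
  set k := (ComplexShape.up ℤ).next n with hk
  -- choose representative cocycles
  obtain ⟨b, hb⟩ := QuotientAddGroup.mk_surjective ((B.sc n).abHomologyIso.hom β)
  obtain ⟨c, hc⟩ := QuotientAddGroup.mk_surjective ((C.sc n).abHomologyIso.hom γ)
  have hβ : (B.sc n).abHomologyIso.inv (QuotientAddGroup.mk b) = β := by
    rw [hb]; exact ConcreteCategory.congr_hom (B.sc n).abHomologyIso.hom_inv_id β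
  have hγ : (C.sc n).abHomologyIso.inv (QuotientAddGroup.mk c) = γ := by
    rw [hc]; exact ConcreteCategory.congr_hom (C.sc n).abHomologyIso.hom_inv_id γ
  rw [← hβ, ← hγ, homologyMap_inv_mk r n b, homologyMap_inv_mk s n c] at hβγ
  have hquot := inv_injective _ hβγ
  rw [QuotientAddGroup.eq] at hquot
  obtain ⟨w, hw⟩ := hquot
  -- `w : D.X m`, and `D.d m n w = - r b + s c` in `D.X n`.
  have hw' : D.d m n w = - r.f n (val2 b) + s.f n (val2 c) := congrArg Subtype.val hw
  obtain ⟨y, hy⟩ := hsurj m w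
  have hsd : s.f n (C.d m n y) = D.d m n w := by
    rw [← hy, ← ConcreteCategory.comp_apply, ← s.comm m n, ConcreteCategory.comp_apply]
  -- correct the representative `c`
  have hc₂cyc : C.d n k (val2 c - C.d m n y) = 0 := by
    rw [map_sub, show C.d n k (val2 c) = 0 from c.2, ← ConcreteCategory.comp_apply, C.d_comp_d m n k, zero_app, sub_zero]
  set c₂ : AddMonoidHom.ker (C.sc n).g.hom := ⟨val2 c - C.d m n y, hc₂cyc⟩ with hc₂
  have hclass : (QuotientAddGroup.mk c₂ :
        _ ⧸ AddMonoidHom.range (C.sc n).abToCycles) = QuotientAddGroup.mk c := by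
    rw [QuotientAddGroup.eq]
    refine ⟨y, Subtype.ext ?_⟩
    show C.d m n y = -(val2 c - C.d m n y) + val2 c
    abel
  have hsc₂ : r.f n (val2 b) = s.f n (val2 c - C.d m n y) := by
    rw [map_sub, hsd, hw']
    abel
  obtain ⟨a, ⟨hab, hac⟩, -⟩ := hpullback n (val2 b) (val2 c - C.d m n y) hsc₂
  -- `a` is a cocycle
  have hacyc : A.d n k a = 0 := by
    obtain ⟨z, -, huniq⟩ := hpullback k 0 0 (by simp)
    have h1 : A.d n k a = z := by
      refine huniq _ ⟨?_, ?_⟩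
      · rw [← ConcreteCategory.comp_apply, ← p.comm n k, ConcreteCategory.comp_apply, hab]
        exact b.2
      · rw [← ConcreteCategory.comp_apply, ← q.comm n k, ConcreteCategory.comp_apply, hac]
        exact hc₂cyc
    have h2 : (0 : A.X k) = z := huniq 0 ⟨map_zero _, map_zero _⟩
    rw [h1, ← h2]
  refine ⟨(A.sc n).abHomologyIso.inv (QuotientAddGroup.mk ⟨a, hacyc⟩), ?_, ?_⟩
  · rw [homologyMap_inv_mk p n]
    rw [show kerMap ((shortComplexFunctor _ _ n).map p) ⟨a, hacyc⟩ = b from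
      Subtype.ext hab]
    exact hβ
  · rw [homologyMap_inv_mk q n]
    rw [show kerMap ((shortComplexFunctor _ _ n).map q) ⟨a, hacyc⟩ = c₂ from
      Subtype.ext hac]
    rw [hclass]
    exact hγ
end

section
/- Let X be a metrizable topological space, A ⊆ X a nonempty closed subset, and let d and d' be two metrics on X, each inducing the topology of X. For a metric ρ on X define the quotient pseudometric collapsing A by D_ρ(x, y) = min(ρ(x, y), ρ(x, A) + ρ(y, A)), where ρ(x, A) = inf_{a∈A} ρ(x, a). Then the topologies on X induced by the pseudometrics D_d and D_{d'} coincide if and only if for every sequence (x_i) in X one has d(x_i, A) → 0 if and only if d'(x_i, A) → 0. -/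
/-- The distance from a point to a set, with respect to a distance function `d`. -/
noncomputable def setDist {X : Type*} (d : X → X → ℝ) (A : Set X) (x : X) : ℝ :=
  sInf ((fun a => d x a) '' A)

/-- The quotient pseudometric on `X` collapsing `A`:
`D_ρ(x, y) = min(ρ(x, y), ρ(x, A) + ρ(y, A))`. -/
noncomputable def quotDist {X : Type*} (d : X → X → ℝ) (A : Set X) (x y : X) : ℝ :=
  min (d x y) (setDist d A x + setDist d A y)

/-- A set is open with respect to a distance function `ρ` if around every of its
points it contains a `ρ`-ball of some positive radius. -/
def IsOpenWrt {X : Type*} (ρ : X → X → ℝ) (s : Set X) : Prop :=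
  ∀ x ∈ s, ∃ ε > 0, ∀ y, ρ x y < ε → y ∈ s

/-!
A `D_ρ`-ball of radius `ε` around a point of `A` is the uniform neighbourhood
`{y | ρ(y, A) < ε}` of `A`, while around a point `x ∉ A` the `D_ρ`-balls of radius
below `ρ(x, A) > 0` are `ρ`-balls. Hence a set is `D_ρ`-open iff it is open in `X` and,
if it meets `A`, belongs to the filter `comap ρ(·, A) (𝓝 0)` of uniform neighbourhoods
of `A`. The topologies of `D_d` and `D_{d'}` therefore agree iff these two filters agree,
and by the sequential characterisation of filter convergence that is the sequence
condition.
-/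

open Filter Topology

structure IsPseudoMetric {X : Type*} (d : X → X → ℝ) : Prop where
  self_eq_zero : ∀ x, d x x = 0
  symm : ∀ x y, d x y = d y x
  triangle : ∀ x y z, d x z ≤ d x y + d y z

theorem setDist_pos {X : Type*} {d : X → X → ℝ} {A : Set X} (hA : A.Nonempty)
    (hAc : IsOpenWrt d Aᶜ) {x : X} (hx : x ∉ A) : 0 < setDist d A x := by
  obtain ⟨ε, hε, hball⟩ := hAc x hx
  refine hε.trans_le (le_csInf (hA.image _) ?_)
  rintro _ ⟨a, ha, rfl⟩
  by_contra! h
  exact hball a h ha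

namespace IsPseudoMetric

variable {X : Type*} {d : X → X → ℝ} {A : Set X}

theorem nonneg (hd : IsPseudoMetric d) (x y : X) : 0 ≤ d x y := by
  have := hd.triangle x y x
  rw [hd.self_eq_zero, hd.symm y x] at this
  linarith

theorem setDist_nonneg (hd : IsPseudoMetric d) (x : X) : 0 ≤ setDist d A x :=
  Real.sInf_nonneg (by rintro _ ⟨a, -, rfl⟩; exact hd.nonneg x a)

theorem setDist_le (hd : IsPseudoMetric d) {a : X} (ha : a ∈ A) (x : X) :
    setDist d A x ≤ d x a :=
  csInf_le ⟨0, by rintro _ ⟨b, -, rfl⟩; exact hd.nonneg x b⟩ ⟨a, ha, rfl⟩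

theorem setDist_of_mem (hd : IsPseudoMetric d) {a : X} (ha : a ∈ A) : setDist d A a = 0 :=
  le_antisymm (hd.self_eq_zero a ▸ hd.setDist_le ha a) (hd.setDist_nonneg a)

theorem setDist_le_add (hd : IsPseudoMetric d) (hA : A.Nonempty) (x y : X) :
    setDist d A x ≤ d x y + setDist d A y := by
  suffices setDist d A x - d x y ≤ setDist d A y by linarith
  refine le_csInf (hA.image _) ?_
  rintro _ ⟨a, ha, rfl⟩
  linarith [hd.setDist_le ha x, hd.triangle x y a]

theorem quotDist_eq_setDist (hd : IsPseudoMetric d) {a : X} (ha : a ∈ A) (y : X) :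
    quotDist d A a y = setDist d A y := by
  rw [quotDist, hd.setDist_of_mem ha, zero_add, hd.symm]
  exact min_eq_right (hd.setDist_le ha y)

theorem mem_comap_setDist (hd : IsPseudoMetric d) {s : Set X} :
    s ∈ comap (setDist d A) (𝓝 0) ↔ ∃ ε > 0, ∀ y, setDist d A y < ε → y ∈ s := by
  simp only [(Metric.nhds_basis_ball.comap _).mem_iff, Set.subset_def, Set.mem_preimage,
    Metric.mem_ball, Real.dist_eq, sub_zero, abs_of_nonneg (hd.setDist_nonneg _)]

theorem isOpenWrt_quotDist_setDist_lt (hd : IsPseudoMetric d) (hA : A.Nonempty) (ε : ℝ) :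
    IsOpenWrt (quotDist d A) {y | setDist d A y < ε} := by
  intro x hx
  refine ⟨ε - setDist d A x, sub_pos.2 hx, fun y hy => show setDist d A y < ε from ?_⟩
  rcases min_lt_iff.1 hy with hxy | hxy
  · linarith [hd.setDist_le_add hA y x, hd.symm x y]
  · linarith [hd.setDist_nonneg (A := A) x]

theorem isOpenWrt_quotDist_iff (hd : IsPseudoMetric d) (hA : A.Nonempty) (hAc : IsOpenWrt d Aᶜ)
    (s : Set X) :
    IsOpenWrt (quotDist d A) s ↔
      IsOpenWrt d s ∧ ((s ∩ A).Nonempty → s ∈ comap (setDist d A) (𝓝 0)) := by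
  refine ⟨fun hs => ⟨fun x hx => ?_, fun ⟨a, has, haA⟩ => ?_⟩, fun ⟨hs, hsA⟩ x hx => ?_⟩
  · obtain ⟨ε, hε, hball⟩ := hs x hx
    exact ⟨ε, hε, fun y hy => hball y ((min_le_left _ _).trans_lt hy)⟩
  · obtain ⟨ε, hε, hball⟩ := hs a has
    exact hd.mem_comap_setDist.2
      ⟨ε, hε, fun y hy => hball y (hd.quotDist_eq_setDist haA y ▸ hy)⟩
  by_cases hxA : x ∈ A
  · obtain ⟨ε, hε, hball⟩ := hd.mem_comap_setDist.1 (hsA ⟨x, hx, hxA⟩)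
    exact ⟨ε, hε, fun y hy => hball y (hd.quotDist_eq_setDist hxA y ▸ hy)⟩
  · obtain ⟨ε, hε, hball⟩ := hs x hx
    refine ⟨min ε (setDist d A x), lt_min hε (setDist_pos hA hAc hxA), fun y hy => hball y ?_⟩
    obtain ⟨hyε, hyA⟩ := lt_min_iff.1 hy
    -- below `d(x, A)` the minimum defining `D(x, y)` is attained by `d(x, y)`
    have hsum := le_add_of_nonneg_right (a := setDist d A x) (hd.setDist_nonneg (A := A) y)
    have hdS := (min_lt_iff.1 (hyA.trans_le hsum)).resolve_right (lt_irrefl _)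
    exact min_eq_left hdS.le ▸ hyε

end IsPseudoMetric

theorem comap_setDist_le_of_forall_isOpenWrt {X : Type*} {d d' : X → X → ℝ} {A : Set X}
    (hd : IsPseudoMetric d) (hd' : IsPseudoMetric d') (hA : A.Nonempty)
    (H : ∀ s, IsOpenWrt (quotDist d A) s → IsOpenWrt (quotDist d' A) s) :
    comap (setDist d' A) (𝓝 0) ≤ comap (setDist d A) (𝓝 0) := by
  intro t ht
  obtain ⟨ε, hε, hεt⟩ := hd.mem_comap_setDist.1 ht
  obtain ⟨a, ha⟩ := hA
  have ha_mem : a ∈ {y | setDist d A y < ε} := by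
    simpa only [Set.mem_ofPred_eq, hd.setDist_of_mem ha] using hε
  obtain ⟨δ, hδ, hball⟩ := H _ (hd.isOpenWrt_quotDist_setDist_lt ⟨a, ha⟩ ε) a ha_mem
  exact hd'.mem_comap_setDist.2
    ⟨δ, hδ, fun y hy => hεt y (hball y (hd'.quotDist_eq_setDist ha y ▸ hy))⟩

theorem forall_seq_tendsto_iff_iff_comap_eq {X Y : Type*} {f g : X → Y} {l : Filter Y}
    [l.IsCountablyGenerated] :
    (∀ x : ℕ → X, Tendsto (fun i => f (x i)) atTop l ↔ Tendsto (fun i => g (x i)) atTop l) ↔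
      comap f l = comap g l := by
  have seq_imp_iff_le : ∀ {f g : X → Y}, (∀ x : ℕ → X,
      Tendsto (fun i => f (x i)) atTop l → Tendsto (fun i => g (x i)) atTop l) ↔
        comap f l ≤ comap g l := by
    intro f g
    rw [← tendsto_iff_comap, tendsto_iff_seq_tendsto]
    simp only [tendsto_comap_iff, Function.comp_def]
  rw [le_antisymm_iff, ← seq_imp_iff_le, ← seq_imp_iff_le]
  exact ⟨fun h => ⟨fun x => (h x).1, fun x => (h x).2⟩, fun h x => ⟨h.1 x, h.2 x⟩⟩

/-- **Lemma on metric quotients.**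
Let `X` be a metrizable space, `A ⊆ X` a nonempty closed subset, and `d`, `d'` two
metrics inducing the topology of `X`. Then the topologies induced by the quotient
pseudometrics `D_d` and `D_{d'}` collapsing `A` coincide if and only if, for every
sequence `(x_i)` in `X`, `d(x_i, A) → 0` iff `d'(x_i, A) → 0`. -/
theorem stmt18 {X : Type*} [TopologicalSpace X]
    (A : Set X) (hA : IsClosed A) (hAne : A.Nonempty)
    (d : X → X → ℝ)
    (hd_symm : ∀ x y, d x y = d y x)
    (hd_tri : ∀ x y z, d x z ≤ d x y + d y z)
    (hd_eq : ∀ x y, d x y = 0 ↔ x = y)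
    (hd_top : ∀ s : Set X, IsOpen s ↔ IsOpenWrt d s)
    (d' : X → X → ℝ)
    (hd'_symm : ∀ x y, d' x y = d' y x)
    (hd'_tri : ∀ x y z, d' x z ≤ d' x y + d' y z)
    (hd'_eq : ∀ x y, d' x y = 0 ↔ x = y)
    (hd'_top : ∀ s : Set X, IsOpen s ↔ IsOpenWrt d' s) :
    (∀ s : Set X, IsOpenWrt (quotDist d A) s ↔ IsOpenWrt (quotDist d' A) s) ↔
      (∀ x : ℕ → X,
        (Filter.Tendsto (fun i => setDist d A (x i)) Filter.atTop (nhds 0) ↔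
          Filter.Tendsto (fun i => setDist d' A (x i)) Filter.atTop (nhds 0))) := by
  have hd : IsPseudoMetric d := ⟨fun x => (hd_eq x x).2 rfl, hd_symm, hd_tri⟩
  have hd' : IsPseudoMetric d' := ⟨fun x => (hd'_eq x x).2 rfl, hd'_symm, hd'_tri⟩
  have hAc : IsOpenWrt d Aᶜ := (hd_top _).1 hA.isOpen_compl
  have hAc' : IsOpenWrt d' Aᶜ := (hd'_top _).1 hA.isOpen_compl
  rw [forall_seq_tendsto_iff_iff_comap_eq]
  constructor
  · intro H
    exact le_antisymm (comap_setDist_le_of_forall_isOpenWrt hd' hd hAne fun s => (H s).2)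
      (comap_setDist_le_of_forall_isOpenWrt hd hd' hAne fun s => (H s).1)
  · intro hF s
    rw [hd.isOpenWrt_quotDist_iff hAne hAc, hd'.isOpenWrt_quotDist_iff hAne hAc', ← hd_top,
      ← hd'_top, hF]
end
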